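/- arXiv:0805.4150 — 3 statements merged into one kernel-verified Lean document; each statement's English description precedes it below -/
import Mathlib

section
/- Let R be a ring and {S_i}_{i∈I} a family of multiplicatively closed subsets of non-zero-divisors of R, each containing 1 and satisfying the left and right Ore conditions. Then the multiplicative closure ⟨S_i | i ∈ I⟩ of the union of the S_i also satisfies the left and right Ore conditions. -/
/-- If each member of a family of multiplicatively closed sets of non-zero-divisors containing 1
satisfies the left and right Ore conditions, then so does the multiplicative closure of their
union. -/
theorem stmt1 {R : Type*} [Ring R] {ι : Type*} (S : ι → Set R)
    (hone : ∀ i, (1 : R) ∈ S i)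
    (hmul : ∀ i, ∀ a ∈ S i, ∀ b ∈ S i, a * b ∈ S i)
    (hnzd : ∀ i, ∀ s ∈ S i, s ∈ nonZeroDivisors R)
    (hleft : ∀ i, ∀ t : R, ∀ s ∈ S i, ∃ s' ∈ S i, ∃ t' : R, s' * t = t' * s)
    (hright : ∀ i, ∀ t : R, ∀ s ∈ S i, ∃ s' ∈ S i, ∃ t' : R, t * s' = s * t') :
    ∀ t : R, ∀ s ∈ Submonoid.closure (⋃ i, S i),
      (∃ s' ∈ Submonoid.closure (⋃ i, S i), ∃ t' : R, s' * t = t' * s) ∧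
      (∃ s' ∈ Submonoid.closure (⋃ i, S i), ∃ t' : R, t * s' = s * t') := by
  have key : ∀ s ∈ Submonoid.closure (⋃ i, S i), ∀ t : R,
      (∃ s' ∈ Submonoid.closure (⋃ i, S i), ∃ t' : R, s' * t = t' * s) ∧
      (∃ s' ∈ Submonoid.closure (⋃ i, S i), ∃ t' : R, t * s' = s * t') := by
    intro s hs
    induction hs using Submonoid.closure_induction with
    | mem x hx =>
      intro t
      obtain ⟨i, hxi⟩ := Set.mem_iUnion.mp hx
      constructor
      · obtain ⟨s', hs', t', h⟩ := hleft i t x hxi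
        exact ⟨s', Submonoid.subset_closure (Set.mem_iUnion.mpr ⟨i, hs'⟩), t', h⟩
      · obtain ⟨s', hs', t', h⟩ := hright i t x hxi
        exact ⟨s', Submonoid.subset_closure (Set.mem_iUnion.mpr ⟨i, hs'⟩), t', h⟩
    | one =>
      intro t
      exact ⟨⟨1, one_mem _, t, by rw [one_mul, mul_one]⟩, ⟨1, one_mem _, t, by rw [mul_one, one_mul]⟩⟩
    | mul x y hx hy ihx ihy =>
      intro t
      constructor
      · obtain ⟨s₁, hs₁, t₁, h₁⟩ := (ihy t).1
        obtain ⟨s₂, hs₂, t₂, h₂⟩ := (ihx t₁).1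
        refine ⟨s₂ * s₁, mul_mem hs₂ hs₁, t₂, ?_⟩
        rw [mul_assoc, h₁, ← mul_assoc, h₂, mul_assoc]
      · obtain ⟨s₁, hs₁, t₁, h₁⟩ := (ihx t).2
        obtain ⟨s₂, hs₂, t₂, h₂⟩ := (ihy t₁).2
        refine ⟨s₁ * s₂, mul_mem hs₁ hs₂, t₂, ?_⟩
        rw [← mul_assoc, h₁, mul_assoc, h₂, ← mul_assoc]
  exact fun t s hs => key s hs t
end

section
/- Let G be a group, H a normal subgroup of G, and S ⊆ ℤH a multiplicatively closed set of non-zero-divisors satisfying the left and right Ore conditions in ℤH, such that gSg⁻¹ ⊆ S for all g ∈ G. Then S, viewed as a subset of ℤG, satisfies the left and right Ore conditions in ℤG. -/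
open MonoidAlgebra in
lemma commonLeftMul {R : Type*} [Ring R] (S : Set R) (hone : (1:R) ∈ S)
    (hmul : ∀ a ∈ S, ∀ b ∈ S, a * b ∈ S)
    (hleft : ∀ t : R, ∀ s ∈ S, ∃ s' ∈ S, ∃ t' : R, s' * t = t' * s)
    {ι : Type*} [DecidableEq ι] (F : Finset ι) (f : ι → R) (hf : ∀ i ∈ F, f i ∈ S) :
    ∃ σ ∈ S, ∀ i, ∃ d, i ∈ F → σ = d * f i := by
  classical
  induction F using Finset.induction_on with
  | empty => exact ⟨1, hone, fun i => ⟨0, by simp⟩⟩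
  | @insert a F ha ih =>
    obtain ⟨σ, hσ, hd⟩ := ih (fun i hi => hf i (Finset.mem_insert_of_mem hi))
    obtain ⟨τ, hτ, w, hw⟩ := hleft σ (f a) (hf a (Finset.mem_insert_self a F))
    refine ⟨τ * σ, hmul _ hτ _ hσ, fun i => ?_⟩
    by_cases hia : i = a
    · exact ⟨w, fun _ => by rw [hw, hia]⟩
    · obtain ⟨d, hdd⟩ := hd i
      exact ⟨τ * d, fun hi => by
        rcases Finset.mem_insert.1 hi with h | h
        · exact absurd h hia
        · rw [mul_assoc, ← hdd h]⟩

lemma commonRightMul {R : Type*} [Ring R] (S : Set R) (hone : (1:R) ∈ S)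
    (hmul : ∀ a ∈ S, ∀ b ∈ S, a * b ∈ S)
    (hright : ∀ t : R, ∀ s ∈ S, ∃ s' ∈ S, ∃ t' : R, t * s' = s * t')
    {ι : Type*} [DecidableEq ι] (F : Finset ι) (f : ι → R) (hf : ∀ i ∈ F, f i ∈ S) :
    ∃ σ ∈ S, ∀ i, ∃ d, i ∈ F → σ = f i * d := by
  classical
  induction F using Finset.induction_on with
  | empty => exact ⟨1, hone, fun i => ⟨0, by simp⟩⟩
  | @insert a F ha ih =>
    obtain ⟨σ, hσ, hd⟩ := ih (fun i hi => hf i (Finset.mem_insert_of_mem hi))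
    obtain ⟨τ, hτ, w, hw⟩ := hright σ (f a) (hf a (Finset.mem_insert_self a F))
    refine ⟨σ * τ, hmul _ hσ _ hτ, fun i => ?_⟩
    by_cases hia : i = a
    · exact ⟨w, fun _ => by rw [hw, hia]⟩
    · obtain ⟨d, hdd⟩ := hd i
      exact ⟨d * τ, fun hi => by
        rcases Finset.mem_insert.1 hi with h | h
        · exact absurd h hia
        · rw [← mul_assoc, ← hdd h]⟩
/-- Let H be a normal subgroup of G and S ⊆ ℤH a multiplicatively closed set of non-zero-divisors
satisfying the left and right Ore conditions in ℤH and closed under conjugation by elements of G.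
Then the image of S in ℤG satisfies the left and right Ore conditions in ℤG. -/
theorem stmt2 {G : Type*} [Group G] (H : Subgroup G) [H.Normal]
    (S : Set (MonoidAlgebra ℤ H))
    (hone : (1 : MonoidAlgebra ℤ H) ∈ S)
    (hmul : ∀ a ∈ S, ∀ b ∈ S, a * b ∈ S)
    (hnzd : ∀ s ∈ S, s ∈ nonZeroDivisors (MonoidAlgebra ℤ H))
    (hleft : ∀ t : MonoidAlgebra ℤ H, ∀ s ∈ S, ∃ s' ∈ S, ∃ t' : MonoidAlgebra ℤ H,
      s' * t = t' * s)
    (hright : ∀ t : MonoidAlgebra ℤ H, ∀ s ∈ S, ∃ s' ∈ S, ∃ t' : MonoidAlgebra ℤ H,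
      t * s' = s * t')
    (hconj : ∀ g : G, ∀ s ∈ S, ∃ s' ∈ S,
      MonoidAlgebra.single g (1 : ℤ) * MonoidAlgebra.mapDomainRingHom ℤ H.subtype s *
        MonoidAlgebra.single g⁻¹ (1 : ℤ) = MonoidAlgebra.mapDomainRingHom ℤ H.subtype s') :
    ∀ t : MonoidAlgebra ℤ G, ∀ s ∈ (MonoidAlgebra.mapDomainRingHom ℤ H.subtype) '' S,
      (∃ s' ∈ (MonoidAlgebra.mapDomainRingHom ℤ H.subtype) '' S,
        ∃ t' : MonoidAlgebra ℤ G, s' * t = t' * s) ∧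
      (∃ s' ∈ (MonoidAlgebra.mapDomainRingHom ℤ H.subtype) '' S,
        ∃ t' : MonoidAlgebra ℤ G, t * s' = s * t') := by
  classical
  intro t s hs
  obtain ⟨sh, hsh, rfl⟩ := hs
  set ι : MonoidAlgebra ℤ H →+* MonoidAlgebra ℤ G :=
    MonoidAlgebra.mapDomainRingHom ℤ H.subtype with hιdef
  have hsingle : ∀ (c : ℤ), ι (MonoidAlgebra.single (1 : H) c) = MonoidAlgebra.single (1 : G) c := by
    intro c
    show MonoidAlgebra.mapDomain (H.subtype) (MonoidAlgebra.single 1 c) = MonoidAlgebra.single 1 c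
    rw [MonoidAlgebra.mapDomain_single, map_one]
  have hts : t = ∑ g ∈ t.coeff.support, MonoidAlgebra.single g (t.coeff g) := by
    conv_lhs => rw [← MonoidAlgebra.sum_coeff_single t]
    rfl
  constructor
  · -- left Ore
    choose τ hτ u hu using fun g : G => hleft (MonoidAlgebra.single (1 : H) (t.coeff g)) sh hsh
    choose σ hσ hσeq using fun g : G => hconj g (τ g) (hτ g)
    obtain ⟨Sig, hSig, hd⟩ := commonLeftMul S hone hmul hleft t.coeff.support σ (fun i _ => hσ i)
    choose d hdd using hd
    refine ⟨ι Sig, ⟨Sig, hSig, rfl⟩,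
      ∑ g ∈ t.coeff.support, ι (d g) * MonoidAlgebra.single g (1:ℤ) * ι (u g), ?_⟩
    conv_lhs => rw [hts]
    rw [Finset.mul_sum, Finset.sum_mul]
    refine Finset.sum_congr rfl fun g hg => ?_
    calc ι Sig * MonoidAlgebra.single g (t.coeff g)
        = ι (d g) * (MonoidAlgebra.single g (1:ℤ) * ι (τ g) * MonoidAlgebra.single g⁻¹ (1:ℤ))
            * MonoidAlgebra.single g (t.coeff g) := by
          rw [hdd g hg, map_mul, hσeq g]
      _ = ι (d g) * MonoidAlgebra.single g (1:ℤ) *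
            (ι (τ g) * (MonoidAlgebra.single g⁻¹ (1:ℤ) * MonoidAlgebra.single g (t.coeff g))) := by
          simp only [mul_assoc]
      _ = ι (d g) * MonoidAlgebra.single g (1:ℤ) * ι (τ g * MonoidAlgebra.single (1:H) (t.coeff g)) := by
          rw [MonoidAlgebra.single_mul_single, inv_mul_cancel, one_mul, map_mul, hsingle]
      _ = ι (d g) * MonoidAlgebra.single g (1:ℤ) * (ι (u g) * ι sh) := by
          rw [hu g, map_mul]
      _ = ι (d g) * MonoidAlgebra.single g (1:ℤ) * ι (u g) * ι sh := by
          simp only [mul_assoc]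
  · -- right Ore
    choose τ hτ u hu using fun g : G => hright (MonoidAlgebra.single (1 : H) (t.coeff g)) sh hsh
    choose σ hσ hσeq using fun g : G => hconj g⁻¹ (τ g) (hτ g)
    obtain ⟨Sig, hSig, hd⟩ := commonRightMul S hone hmul hright t.coeff.support σ (fun i _ => hσ i)
    choose d hdd using hd
    refine ⟨ι Sig, ⟨Sig, hSig, rfl⟩,
      ∑ g ∈ t.coeff.support, ι (u g) * MonoidAlgebra.single g (1:ℤ) * ι (d g), ?_⟩
    conv_lhs => rw [hts]
    rw [Finset.sum_mul, Finset.mul_sum]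
    refine Finset.sum_congr rfl fun g hg => ?_
    have hσeq' : ι (σ g) = MonoidAlgebra.single g⁻¹ (1:ℤ) * ι (τ g) * MonoidAlgebra.single g (1:ℤ) := by
      rw [← hσeq g, inv_inv]
    calc MonoidAlgebra.single g (t.coeff g) * ι Sig
        = MonoidAlgebra.single g (t.coeff g) *
            (MonoidAlgebra.single g⁻¹ (1:ℤ) * ι (τ g) * MonoidAlgebra.single g (1:ℤ)) * ι (d g) := by
          rw [hdd g hg, map_mul, hσeq']; simp only [mul_assoc]
      _ = (MonoidAlgebra.single g (t.coeff g) * MonoidAlgebra.single g⁻¹ (1:ℤ)) * ι (τ g)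
            * (MonoidAlgebra.single g (1:ℤ) * ι (d g)) := by
          simp only [mul_assoc]
      _ = ι (MonoidAlgebra.single (1:H) (t.coeff g) * τ g) * (MonoidAlgebra.single g (1:ℤ) * ι (d g)) := by
          rw [MonoidAlgebra.single_mul_single, mul_inv_cancel, mul_one, map_mul, hsingle]
      _ = ι sh * (ι (u g) * (MonoidAlgebra.single g (1:ℤ) * ι (d g))) := by
          rw [hu g, map_mul, mul_assoc]
      _ = ι sh * (ι (u g) * MonoidAlgebra.single g (1:ℤ) * ι (d g)) := by
          simp only [mul_assoc]
end

section
/- Let R be a ring, C_* a chain complex of finitely generated free R-modules, bounded below and above, such that all homology modules H_n(C_*) vanish. Then C_* is chain contractible, i.e., there exist maps δ_n : C_n → C_{n+1} with c_{n+1}∘δ_n + δ_{n-1}∘c_n = id for all n. -/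
open CategoryTheory Limits

universe u

namespace Stmt9Aux

variable {R : Type u} [Ring R] (C : ChainComplex (ModuleCat.{u} R) ℤ)

/-- The data of a partial chain contraction around degree `n`. -/
structure Pack (n : ℤ) where
  f : C.X n ⟶ C.X (n + 1)
  g : C.X (n - 1) ⟶ C.X n
  eq : f ≫ C.d (n + 1) n + C.d n (n - 1) ≫ g = 𝟙 (C.X n)

/-- Transport a `Pack` along an equality of indices. -/
def packCast {m n : ℤ} (h : m = n) (p : Pack C m) : Pack C n := by subst h; exact p

lemma packCast_f {m n : ℤ} (h : m = n) (p : Pack C m) :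
    (packCast C h p).f =
      eqToHom (by rw [h]) ≫ p.f ≫ eqToHom (by rw [h]) := by
  subst h; simp [packCast]

lemma packCast_g {m n : ℤ} (h : m = n) (p : Pack C m) :
    (packCast C h p).g =
      eqToHom (by rw [h]) ≫ p.g ≫ eqToHom (by rw [h]) := by
  subst h; simp [packCast]

lemma d_comp_eqToHom {i j j' : ℤ} (h : j = j') :
    C.d i j ≫ eqToHom (congrArg C.X h) = C.d i j' := by subst h; simp

/-- One step of the inductive construction of the contraction. -/
noncomputable def step (hproj : ∀ n, Projective (C.X n)) (hexact : ∀ n, C.ExactAt n)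
    {m : ℤ} (p : Pack C m) : Pack C (m + 1) := by
  have := hproj (m + 1)
  have hS : (C.sc' (m + 1 + 1) (m + 1) m).Exact := by
    rw [← C.exactAt_iff' (m + 1 + 1) (m + 1) m
      ((ComplexShape.down ℤ).prev_eq' (by simp [ComplexShape.down_Rel]))
      ((ComplexShape.down ℤ).next_eq' (by simp [ComplexShape.down_Rel]))]
    exact hexact (m + 1)
  have hg : (𝟙 (C.X (m + 1)) - C.d (m + 1) m ≫ p.f) ≫ (C.sc' (m + 1 + 1) (m + 1) m).g = 0 := by
    have h1 : p.f ≫ C.d (m + 1) m = 𝟙 (C.X m) - C.d m (m - 1) ≫ p.g := by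
      rw [← p.eq]; abel
    dsimp [HomologicalComplex.sc', HomologicalComplex.shortComplexFunctor']
    rw [Preadditive.sub_comp, Category.id_comp, Category.assoc, h1]
    simp [Preadditive.comp_sub]
    rfl
  refine ⟨hS.liftFromProjective (𝟙 (C.X (m + 1)) - C.d (m + 1) m ≫ p.f) hg,
    eqToHom (congrArg C.X (show m + 1 - 1 = m by omega)) ≫ p.f, ?_⟩
  have hlift := hS.liftFromProjective_comp (𝟙 (C.X (m + 1)) - C.d (m + 1) m ≫ p.f) hg
  dsimp [HomologicalComplex.sc', HomologicalComplex.shortComplexFunctor'] at hlift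
  have hd : C.d (m + 1) (m + 1 - 1) ≫ eqToHom (congrArg C.X (show m + 1 - 1 = m by omega)) =
      C.d (m + 1) m := d_comp_eqToHom C (show m + 1 - 1 = m by omega)
  erw [hlift]
  rw [← Category.assoc (C.d (m + 1) (m + 1 - 1)), hd]
  simp

/-- The full inductive construction of the contraction, by induction on `n` starting
below the lower bound `a`. -/
noncomputable def aux (a : ℤ) (hz : ∀ n, n < a → IsZero (C.X n))
    (hproj : ∀ n, Projective (C.X n)) (hexact : ∀ n, C.ExactAt n) : ∀ n : ℤ, Pack C n :=
  fun n =>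
    if h : n < a then
      ⟨0, 0, by
        rw [zero_comp, comp_zero, add_zero]
        exact (hz n h).eq_of_src _ _⟩
    else
      packCast C (by omega : n - 1 + 1 = n)
        (step C hproj hexact (aux a hz hproj hexact (n - 1)))
  termination_by n => (n - a + 1).toNat
  decreasing_by omega

lemma aux_eq (a : ℤ) (hz : ∀ n, n < a → IsZero (C.X n))
    (hproj : ∀ n, Projective (C.X n)) (hexact : ∀ n, C.ExactAt n) (n : ℤ) :
    aux C a hz hproj hexact n =
      if h : n < a then
        ⟨0, 0, by
          rw [zero_comp, comp_zero, add_zero]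
          exact (hz n h).eq_of_src _ _⟩
      else
        packCast C (by omega : n - 1 + 1 = n)
          (step C hproj hexact (aux C a hz hproj hexact (n - 1))) := by
  rw [aux]

/-- Coherence: the `g`-component at `n` is the `f`-component at `n - 1`. -/
lemma aux_g (a : ℤ) (hz : ∀ n, n < a → IsZero (C.X n))
    (hproj : ∀ n, Projective (C.X n)) (hexact : ∀ n, C.ExactAt n) (n : ℤ) :
    (aux C a hz hproj hexact n).g =
      (aux C a hz hproj hexact (n - 1)).f ≫ eqToHom (congrArg C.X (by omega)) := by
  by_cases h : n < a
  · rw [aux_eq C a hz hproj hexact n, dif_pos h,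
      aux_eq C a hz hproj hexact (n - 1), dif_pos (by omega)]
    simp
  · rw [aux_eq C a hz hproj hexact n, dif_neg h, packCast_g]
    dsimp [step]
    simp [eqToHom_trans_assoc]

end Stmt9Aux

/-- A bounded, exact chain complex of finitely generated free modules over an arbitrary ring is
chain contractible: the identity is chain homotopic to the zero map. -/
theorem stmt9 {R : Type u} [Ring R] (C : ChainComplex (ModuleCat.{u} R) ℤ)
    (hfin : ∀ n : ℤ, Module.Finite R (C.X n))
    (hfree : ∀ n : ℤ, Module.Free R (C.X n))
    (hbdd : ∃ a b : ℤ, ∀ n : ℤ, (n < a ∨ b < n) → IsZero (C.X n))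
    (hexact : ∀ n : ℤ, C.ExactAt n) :
    Nonempty (Homotopy (𝟙 C) 0) := by
  obtain ⟨a, b, hab⟩ := hbdd
  have hz : ∀ n, n < a → IsZero (C.X n) := fun n hn => hab n (Or.inl hn)
  have hproj : ∀ n, Projective (C.X n) := fun n =>
    ModuleCat.projective_of_free (Module.Free.chooseBasis R (C.X n))
  set A := Stmt9Aux.aux C a hz hproj hexact with hA
  refine ⟨{
    hom := fun i j =>
      if h : i + 1 = j then (A i).f ≫ eqToHom (congrArg C.X h) else 0
    zero := fun i j hij => dif_neg (by simpa [ComplexShape.down_Rel] using hij)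
    comm := fun i => ?_ }⟩
  have hrel1 : (ComplexShape.down ℤ).Rel i (i - 1) := by simp [ComplexShape.down_Rel]
  have hrel2 : (ComplexShape.down ℤ).Rel (i + 1) i := by simp [ComplexShape.down_Rel]
  rw [dNext_eq _ hrel1, prevD_eq _ hrel2]
  rw [dif_pos (by omega : i - 1 + 1 = i), dif_pos rfl]
  rw [eqToHom_refl, Category.comp_id]
  have hg := Stmt9Aux.aux_g C a hz hproj hexact i
  rw [← hA] at hg
  have heq := (A i).eq
  simp only [HomologicalComplex.id_f, HomologicalComplex.zero_f_apply, add_zero]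
  rw [← hg, ← heq]
  abel
end
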